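/- arXiv:1409.7738 — 7 statements merged into one kernel-verified Lean document; each statement's English description precedes it below -/
import Mathlib

section
/- Every proper metric space is stable: if M is a metric space in which every closed ball is compact, then for any two bounded sequences (x_n) and (y_n) in M and any two non-principal ultrafilters U, V on ℕ, one has lim_{m,U} lim_{n,V} d(x_m, y_n) = lim_{n,V} lim_{m,U} d(x_m, y_n). -/
/-!
In a proper space a bounded sequence has relatively compact range, so it converges along every
ultrafilter: `x → p` along `U` and `y → q` along `V`. By continuity of the distance both inner
limits are `d(x m, q)` and `d(p, y n)`, and both outer limits are then `d(p, q)`.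
-/

open Filter

theorem Bornology.IsBounded.exists_tendsto_ultrafilter {M ι : Type*} [PseudoMetricSpace M]
    [ProperSpace M] {x : ι → M} (hx : Bornology.IsBounded (Set.range x)) (U : Ultrafilter ι) :
    ∃ p, Tendsto x U (nhds p) := by
  have hmem : closure (Set.range x) ∈ U.map x :=
    mem_map.2 (univ_mem' fun i => subset_closure ⟨i, rfl⟩)
  obtain ⟨p, -, hp⟩ := hx.isCompact_closure.ultrafilter_le_nhds' (U.map x) hmem
  exact ⟨p, hp⟩

theorem proper_is_stable_general {M : Type*} [MetricSpace M] [ProperSpace M]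
    (x y : ℕ → M)
    (hx : Bornology.IsBounded (Set.range x)) (hy : Bornology.IsBounded (Set.range y))
    (U V : Ultrafilter ℕ) :
    ∃ (a b : ℕ → ℝ) (L : ℝ),
      (∀ m, Tendsto (fun n => dist (x m) (y n)) (V : Filter ℕ) (nhds (a m))) ∧
      (∀ n, Tendsto (fun m => dist (x m) (y n)) (U : Filter ℕ) (nhds (b n))) ∧
      Tendsto a (U : Filter ℕ) (nhds L) ∧ Tendsto b (V : Filter ℕ) (nhds L) := by
  obtain ⟨p, hp⟩ := hx.exists_tendsto_ultrafilter U
  obtain ⟨q, hq⟩ := hy.exists_tendsto_ultrafilter V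
  exact ⟨fun m => dist (x m) q, fun n => dist p (y n), dist p q,
    fun m => tendsto_const_nhds.dist hq, fun n => hp.dist tendsto_const_nhds,
    hp.dist tendsto_const_nhds, tendsto_const_nhds.dist hq⟩

/-- Every proper metric space is stable: iterated ultrafilter limits of distances
between bounded sequences exist and coincide. -/
theorem proper_is_stable {M : Type*} [MetricSpace M] [ProperSpace M]
    (x y : ℕ → M)
    (hx : Bornology.IsBounded (Set.range x)) (hy : Bornology.IsBounded (Set.range y))
    (U V : Ultrafilter ℕ)
    (hU : ∀ k : ℕ, (U : Filter ℕ) ≠ pure k) (hV : ∀ k : ℕ, (V : Filter ℕ) ≠ pure k) :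
    ∃ (a b : ℕ → ℝ) (L : ℝ),
      (∀ m, Tendsto (fun n => dist (x m) (y n)) (V : Filter ℕ) (nhds (a m))) ∧
      (∀ n, Tendsto (fun m => dist (x m) (y n)) (U : Filter ℕ) (nhds (b n))) ∧
      Tendsto a (U : Filter ℕ) (nhds L) ∧ Tendsto b (V : Filter ℕ) (nhds L) :=
  proper_is_stable_general x y hx hy U V
end

section
/- Every Hilbert space is stable: for any two bounded sequences (x_n), (y_n) in a real inner product space H (complete) and any two non-principal ultrafilters U, V on ℕ, lim_{m,U} lim_{n,V} ‖x_m − y_n‖ = lim_{n,V} lim_{m,U} ‖x_m − y_n‖. -/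
/-!
Along an ultrafilter a bounded sequence `y n` in a Hilbert space has a weak limit `w`
(Banach–Alaoglu, transported by the Riesz isomorphism) and `‖y n‖²` has a limit `q`.
Expanding `‖v - y n‖² = ‖v‖² - 2⟪v, y n⟫ + ‖y n‖²` gives
`lim ‖v - y n‖² = ‖v - w‖² + (q - ‖w‖²)` for every fixed `v`. Applying this twice, both iterated
limits of `‖x m - y n‖²` equal `‖x' - y'‖² + (p - ‖x'‖²) + (q - ‖y'‖²)`, where `x'`, `y'` are the
weak limits and `p`, `q` the limits of the squared norms.
-/

open Filter Metric Topology

theorem IsCompact.exists_tendsto_ultrafilter {α X : Type*} [TopologicalSpace X] {K : Set X}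
    (hK : IsCompact K) (U : Ultrafilter α) {f : α → X} (hf : ∀ a, f a ∈ K) :
    ∃ x, Tendsto f U (𝓝 x) :=
  let ⟨x, _, hx⟩ := hK.ultrafilter_le_nhds' (U.map f) (Ultrafilter.mem_map.2 (univ_mem' hf))
  ⟨x, hx⟩

theorem Ultrafilter.exists_tendsto_of_norm_le {α E : Type*} [SeminormedAddCommGroup E]
    [ProperSpace E] (U : Ultrafilter α) {f : α → E} {R : ℝ} (hf : ∀ a, ‖f a‖ ≤ R) :
    ∃ x, Tendsto f U (𝓝 x) :=
  (isCompact_closedBall 0 R).exists_tendsto_ultrafilter U fun a =>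
    mem_closedBall_zero_iff.2 (hf a)

open scoped InnerProductSpace in
theorem Ultrafilter.exists_tendsto_inner_of_norm_le {α 𝕜 H : Type*} [RCLike 𝕜]
    [NormedAddCommGroup H] [InnerProductSpace 𝕜 H] [CompleteSpace H]
    (U : Ultrafilter α) {x : α → H} {R : ℝ} (hx : ∀ a, ‖x a‖ ≤ R) :
    ∃ w : H, ∀ z : H, Tendsto (fun a => ⟪x a, z⟫_𝕜) U (𝓝 ⟪w, z⟫_𝕜) := by
  obtain ⟨φ, hφ⟩ := (WeakDual.isCompact_closedBall (𝕜 := 𝕜) (E := H) 0 R).exists_tendsto_ultrafilter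
    U (f := fun a => StrongDual.toWeakDual (InnerProductSpace.toDual 𝕜 H (x a)))
    fun a => by simpa using hx a
  refine ⟨(InnerProductSpace.toDual 𝕜 H).symm (WeakDual.toStrongDual φ), fun z => ?_⟩
  rw [InnerProductSpace.toDual_symm_apply]
  exact tendsto_iff_forall_eval_tendsto_topDualPairing.1 hφ z

section WeakLimit

open RealInnerProductSpace

variable {α H : Type*} [NormedAddCommGroup H] [InnerProductSpace ℝ H]
  {l : Filter α} {y : α → H} {w : H} {q : ℝ}

theorem tendsto_norm_sub_sq_of_weak (hw : ∀ z, Tendsto (fun a => ⟪y a, z⟫) l (𝓝 ⟪w, z⟫))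
    (hq : Tendsto (fun a => ‖y a‖ ^ 2) l (𝓝 q)) (v : H) :
    Tendsto (fun a => ‖v - y a‖ ^ 2) l (𝓝 (‖v - w‖ ^ 2 + (q - ‖w‖ ^ 2))) := by
  have hexpand : (fun a => ‖v - y a‖ ^ 2) = fun a => ‖v‖ ^ 2 - 2 * ⟪y a, v⟫ + ‖y a‖ ^ 2 := by
    ext a
    rw [norm_sub_sq_real, real_inner_comm]
  have hlim : ‖v - w‖ ^ 2 + (q - ‖w‖ ^ 2) = ‖v‖ ^ 2 - 2 * ⟪w, v⟫ + q := by
    rw [norm_sub_sq_real, real_inner_comm]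
    ring
  rw [hexpand, hlim]
  exact (tendsto_const_nhds.sub ((hw v).const_mul 2)).add hq

theorem tendsto_norm_sub_of_weak (hw : ∀ z, Tendsto (fun a => ⟪y a, z⟫) l (𝓝 ⟪w, z⟫))
    (hq : Tendsto (fun a => ‖y a‖ ^ 2) l (𝓝 q)) (v : H) :
    Tendsto (fun a => ‖v - y a‖) l (𝓝 √(‖v - w‖ ^ 2 + (q - ‖w‖ ^ 2))) := by
  simpa only [Real.sqrt_sq (norm_nonneg _)] using (tendsto_norm_sub_sq_of_weak hw hq v).sqrt

end WeakLimit

theorem hilbert_is_stable_general {H : Type*} [NormedAddCommGroup H] [InnerProductSpace ℝ H]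
    [CompleteSpace H]
    (x y : ℕ → H)
    (hx : Bornology.IsBounded (Set.range x)) (hy : Bornology.IsBounded (Set.range y))
    (U V : Ultrafilter ℕ) :
    ∃ (a b : ℕ → ℝ) (L : ℝ),
      (∀ m, Tendsto (fun n => ‖x m - y n‖) (V : Filter ℕ) (nhds (a m))) ∧
      (∀ n, Tendsto (fun m => ‖x m - y n‖) (U : Filter ℕ) (nhds (b n))) ∧
      Tendsto a (U : Filter ℕ) (nhds L) ∧ Tendsto b (V : Filter ℕ) (nhds L) := by
  obtain ⟨Cx, hCx⟩ := isBounded_iff_forall_norm_le.1 hx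
  obtain ⟨Cy, hCy⟩ := isBounded_iff_forall_norm_le.1 hy
  replace hCx m : ‖x m‖ ≤ Cx := hCx _ (Set.mem_range_self m)
  replace hCy n : ‖y n‖ ≤ Cy := hCy _ (Set.mem_range_self n)
  obtain ⟨xw, hxw⟩ := U.exists_tendsto_inner_of_norm_le (𝕜 := ℝ) hCx
  obtain ⟨yw, hyw⟩ := V.exists_tendsto_inner_of_norm_le (𝕜 := ℝ) hCy
  obtain ⟨p, hp⟩ := U.exists_tendsto_of_norm_le (f := fun m => ‖x m‖ ^ 2) (R := Cx ^ 2)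
    fun m => by simpa using pow_le_pow_left₀ (norm_nonneg _) (hCx m) 2
  obtain ⟨q, hq⟩ := V.exists_tendsto_of_norm_le (f := fun n => ‖y n‖ ^ 2) (R := Cy ^ 2)
    fun n => by simpa using pow_le_pow_left₀ (norm_nonneg _) (hCy n) 2
  refine ⟨fun m => √(‖x m - yw‖ ^ 2 + (q - ‖yw‖ ^ 2)), fun n => √(‖y n - xw‖ ^ 2 + (p - ‖xw‖ ^ 2)),
    √(‖xw - yw‖ ^ 2 + (p - ‖xw‖ ^ 2) + (q - ‖yw‖ ^ 2)),
    fun m => tendsto_norm_sub_of_weak hyw hq (x m), fun n => ?_, ?_, ?_⟩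
  · simpa only [norm_sub_rev (x _)] using tendsto_norm_sub_of_weak hxw hp (y n)
  · have hx_sq := tendsto_norm_sub_sq_of_weak hxw hp yw
    simp only [norm_sub_rev yw] at hx_sq
    exact (hx_sq.add_const _).sqrt
  · have hy_sq := tendsto_norm_sub_sq_of_weak hyw hq xw
    simp only [norm_sub_rev xw (y _)] at hy_sq
    rw [add_right_comm]
    exact (hy_sq.add_const _).sqrt

/-- Every real Hilbert space is stable: iterated ultrafilter limits of norms of
differences of bounded sequences exist and coincide. -/
theorem hilbert_is_stable {H : Type*} [NormedAddCommGroup H] [InnerProductSpace ℝ H]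
    [CompleteSpace H]
    (x y : ℕ → H)
    (hx : Bornology.IsBounded (Set.range x)) (hy : Bornology.IsBounded (Set.range y))
    (U V : Ultrafilter ℕ)
    (hU : ∀ k : ℕ, (U : Filter ℕ) ≠ pure k) (hV : ∀ k : ℕ, (V : Filter ℕ) ≠ pure k) :
    ∃ (a b : ℕ → ℝ) (L : ℝ),
      (∀ m, Tendsto (fun n => ‖x m - y n‖) (V : Filter ℕ) (nhds (a m))) ∧
      (∀ n, Tendsto (fun m => ‖x m - y n‖) (U : Filter ℕ) (nhds (b n))) ∧
      Tendsto a (U : Filter ℕ) (nhds L) ∧ Tendsto b (V : Filter ℕ) (nhds L) :=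
  hilbert_is_stable_general x y hx hy U V
end

section
/- Let (x_n) be a bounded sequence in ℓ_p (1 ≤ p < ∞) and U a non-principal ultrafilter on ℕ such that lim_{n,U} e_i*(x_n) = 0 for every coordinate i (coordinatewise convergence to 0 along U). Then for every x ∈ ℓ_p, lim_{n,U} ‖x + x_n‖_p^p = ‖x‖_p^p + lim_{n,U} ‖x_n‖_p^p. -/
open Filter
open scoped ENNReal Topology

/-!
For `y` supported in a finite set `s`, `‖y + xₙ‖ᵖ - ‖xₙ‖ᵖ` is a finite sum over `s` of
`|y i + xₙ i|ᵖ - |xₙ i|ᵖ`, which tends to `∑ i ∈ s, |y i|ᵖ = ‖y‖ᵖ` by coordinatewise convergence.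
For general `x`, the maps `x ↦ ‖x + xₙ‖` are all `1`-Lipschitz, so the set of `x` for which
`‖x + xₙ‖ᵖ → ‖x‖ᵖ + ℓ` is closed; it contains the partial sums of `x`, hence `x`.
-/

theorem tendsto_rpow_inv_iff {α : Type*} {l : Filter α} {f : α → ℝ} (hf : ∀ a, 0 ≤ f a)
    {c q : ℝ} (hc : 0 ≤ c) (hq : 0 < q) :
    Tendsto f l (𝓝 (c ^ q⁻¹)) ↔ Tendsto (fun a => f a ^ q) l (𝓝 c) := by
  constructor
  · intro h
    simpa [Real.rpow_inv_rpow hc hq.ne'] using h.rpow_const (Or.inr hq.le)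
  · intro h
    simpa [Real.rpow_rpow_inv (hf _) hq.ne'] using
      h.rpow_const (p := q⁻¹) (Or.inr (by positivity))

theorem isClosed_setOf_tendsto_norm_add_rpow {X α : Type*} [SeminormedAddCommGroup X]
    {l : Filter α} (v : α → X) {Φ : X → ℝ} (hΦ : Continuous Φ) (hΦ0 : ∀ x, 0 ≤ Φ x)
    {q : ℝ} (hq : 0 < q) :
    IsClosed {x | Tendsto (fun a => ‖x + v a‖ ^ q) l (𝓝 (Φ x))} := by
  have hroot : {x | Tendsto (fun a => ‖x + v a‖ ^ q) l (𝓝 (Φ x))} =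
      {x | Tendsto (fun a => ‖x + v a‖) l (𝓝 (Φ x ^ q⁻¹))} :=
    Set.ext fun x => (tendsto_rpow_inv_iff (fun _ => norm_nonneg _) (hΦ0 x) hq).symm
  have hLip (a : α) : LipschitzWith 1 fun x => ‖x + v a‖ := by
    simpa [Function.comp_def] using
      lipschitzWith_one_norm.comp (isometry_add_right (v a)).lipschitz
  rw [hroot]
  exact (LipschitzWith.uniformEquicontinuous _ 1 hLip).equicontinuous.isClosed_setOfPred_tendsto
    (hΦ.rpow_const fun _ => Or.inr (by positivity))

namespace lp

variable {ι : Type*} {E : ι → Type*} [∀ i, NormedAddCommGroup (E i)] {p : ℝ≥0∞}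

theorem norm_add_rpow_eq_of_forall_notMem_eq_zero (hp : 0 < p.toReal) {s : Finset ι}
    {y : lp E p} (hy : ∀ i ∉ s, y i = 0) (z : lp E p) :
    ‖y + z‖ ^ p.toReal =
      ‖z‖ ^ p.toReal + ∑ i ∈ s, (‖y i + z i‖ ^ p.toReal - ‖z i‖ ^ p.toReal) := by
  have hdiff : ∑' i, (‖(y + z) i‖ ^ p.toReal - ‖z i‖ ^ p.toReal) =
      ∑ i ∈ s, (‖y i + z i‖ ^ p.toReal - ‖z i‖ ^ p.toReal) :=
    tsum_eq_sum fun i hi => by simp [hy i hi]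
  rw [Summable.tsum_sub ((lp.memℓp (y + z)).summable hp) ((lp.memℓp z).summable hp),
    ← norm_rpow_eq_tsum hp, ← norm_rpow_eq_tsum hp] at hdiff
  linarith

theorem tendsto_norm_add_rpow_of_forall_notMem_eq_zero {α : Type*} {l : Filter α}
    (hp : 0 < p.toReal) {xs : α → lp E p} (hcoord : ∀ i, Tendsto (fun n => xs n i) l (𝓝 0))
    {ℓ : ℝ} (hℓ : Tendsto (fun n => ‖xs n‖ ^ p.toReal) l (𝓝 ℓ)) {s : Finset ι} {y : lp E p}
    (hy : ∀ i ∉ s, y i = 0) :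
    Tendsto (fun n => ‖y + xs n‖ ^ p.toReal) l (𝓝 (‖y‖ ^ p.toReal + ℓ)) := by
  have hy_norm : ‖y‖ ^ p.toReal = ∑ i ∈ s, ‖y i‖ ^ p.toReal := by
    simpa [Real.zero_rpow hp.ne'] using norm_add_rpow_eq_of_forall_notMem_eq_zero hp hy 0
  simp_rw [norm_add_rpow_eq_of_forall_notMem_eq_zero hp hy, hy_norm, add_comm _ ℓ]
  refine hℓ.add (tendsto_finsetSum s fun i _ => ?_)
  have hnorm (t : E i) : ContinuousAt (fun t : E i => ‖t‖ ^ p.toReal) t :=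
    continuous_norm.continuousAt.rpow_const (Or.inr hp.le)
  simpa [Real.zero_rpow hp.ne'] using
    ((hnorm _).tendsto.comp (tendsto_const_nhds.add (hcoord i))).sub
      ((hnorm 0).tendsto.comp (hcoord i))

end lp

theorem lp_asymptotic_additivity_general (p : ℝ≥0∞) [hp1 : Fact (1 ≤ p)] (hp2 : p ≠ ∞)
    (xs : ℕ → lp (fun _ : ℕ => ℝ) p)
    (U : Ultrafilter ℕ)
    (hcoord : ∀ i : ℕ, Tendsto (fun n => (xs n : ∀ _ : ℕ, ℝ) i) (U : Filter ℕ) (nhds 0))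
    (x : lp (fun _ : ℕ => ℝ) p) (ℓ : ℝ)
    (hℓ : Tendsto (fun n => ‖xs n‖ ^ p.toReal) (U : Filter ℕ) (nhds ℓ)) :
    Tendsto (fun n => ‖x + xs n‖ ^ p.toReal) (U : Filter ℕ)
      (nhds (‖x‖ ^ p.toReal + ℓ)) := by
  have hp : 0 < p.toReal := ENNReal.toReal_pos (zero_lt_one.trans_le hp1.out).ne' hp2
  have hℓ0 : 0 ≤ ℓ := ge_of_tendsto' hℓ fun n => by positivity
  have hclosed := isClosed_setOf_tendsto_norm_add_rpow (l := U) xs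
    (Φ := fun y => ‖y‖ ^ p.toReal + ℓ)
    ((continuous_norm.rpow_const fun _ => Or.inr hp.le).add continuous_const)
    (fun y => by positivity) hp
  refine hclosed.mem_of_tendsto (lp.hasSum_single hp2 x).tendsto_sum_nat
    (Eventually.of_forall fun N => lp.tendsto_norm_add_rpow_of_forall_notMem_eq_zero hp hcoord hℓ
      (s := Finset.range N) fun i hi => ?_)
  simp only [lp.coeFn_sum, Finset.sum_apply, lp.coeFn_single]
  simp [hi]

/-- Garling's lemma: if a bounded sequence in `ℓ_p` converges coordinatewise to `0`
along a non-principal ultrafilter `U`, then `lim_U ‖x + x_n‖^p = ‖x‖^p + lim_U ‖x_n‖^p`. -/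
theorem lp_asymptotic_additivity (p : ℝ≥0∞) [hp1 : Fact (1 ≤ p)] (hp2 : p ≠ ∞)
    (xs : ℕ → lp (fun _ : ℕ => ℝ) p)
    (hb : Bornology.IsBounded (Set.range xs))
    (U : Ultrafilter ℕ) (hU : ∀ k : ℕ, (U : Filter ℕ) ≠ pure k)
    (hcoord : ∀ i : ℕ, Tendsto (fun n => (xs n : ∀ _ : ℕ, ℝ) i) (U : Filter ℕ) (nhds 0))
    (x : lp (fun _ : ℕ => ℝ) p) (ℓ : ℝ)
    (hℓ : Tendsto (fun n => ‖xs n‖ ^ p.toReal) (U : Filter ℕ) (nhds ℓ)) :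
    Tendsto (fun n => ‖x + xs n‖ ^ p.toReal) (U : Filter ℕ)
      (nhds (‖x‖ ^ p.toReal + ℓ)) :=
  lp_asymptotic_additivity_general p (hp1 := hp1) hp2 xs U hcoord x ℓ hℓ
end

section
/- No Banach space linearly isomorphic to c₀ is stable: if X is a Banach space and T : c₀ → X is a linear isomorphism onto a subspace with ‖T‖·‖T⁻¹‖ ≤ 3/2, then X is not stable, since for x_n = T(e_n) and y_m = T(Σ_{i≤m} e_i) one iterated ultrafilter limit of ‖x_n − y_m‖ is at most 3/2 while the other is at least 2. -/
/-!
With `x m = T e_m` and `y n = -T (e_0 + ⋯ + e_n)`, the distance `dist (x m) (y n)` is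
`‖T (e_m + e_0 + ⋯ + e_n)‖`. It is `≥ 2` for `m ≤ n`, where coordinate `m` equals `2`, and
`≤ 3/2` for `n < m`, where the vector is a `0/1` vector. So the limit in `n` first along a
non-principal ultrafilter, then in `m`, is `≥ 2`, while the other order gives `≤ 3/2`.
-/

open Filter Metric
open scoped ZeroAtInfty

/-- A metric space is stable if iterated ultrafilter limits of distances between
bounded sequences exist and commute, for all non-principal ultrafilters. -/
def IsStableSpace (X : Type*) [MetricSpace X] : Prop :=
  ∀ (x y : ℕ → X), Bornology.IsBounded (Set.range x) → Bornology.IsBounded (Set.range y) →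
    ∀ (U V : Ultrafilter ℕ),
      (∀ k : ℕ, (U : Filter ℕ) ≠ pure k) → (∀ k : ℕ, (V : Filter ℕ) ≠ pure k) →
      ∃ (a b : ℕ → ℝ) (L : ℝ),
        (∀ m, Tendsto (fun n => dist (x m) (y n)) (V : Filter ℕ) (nhds (a m))) ∧
        (∀ n, Tendsto (fun m => dist (x m) (y n)) (U : Filter ℕ) (nhds (b n))) ∧
        Tendsto a (U : Filter ℕ) (nhds L) ∧ Tendsto b (V : Filter ℕ) (nhds L)

lemma Filter.hyperfilter_ne_pure {α : Type*} [Infinite α] (k : α) :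
    ((hyperfilter α : Ultrafilter α) : Filter α) ≠ pure k := fun h =>
  notMem_hyperfilter_of_finite (Set.finite_singleton k)
    (Ultrafilter.mem_coe.1 (h ▸ mem_pure.2 rfl))

theorem not_isStableSpace_of_dist_gap {X : Type*} [MetricSpace X] (x y : ℕ → X)
    (hx : Bornology.IsBounded (Set.range x)) (hy : Bornology.IsBounded (Set.range y))
    {A B : ℝ} (hBA : B < A) (hge : ∀ m n, m ≤ n → A ≤ dist (x m) (y n))
    (hle : ∀ m n, n < m → dist (x m) (y n) ≤ B) : ¬ IsStableSpace X := by
  intro hstable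
  obtain ⟨a, b, L, ha, hb, haL, hbL⟩ :=
    hstable x y hx hy (hyperfilter ℕ) (hyperfilter ℕ) hyperfilter_ne_pure hyperfilter_ne_pure
  have hA : ∀ m, A ≤ a m := fun m => ge_of_tendsto (ha m) <|
    Nat.hyperfilter_le_atTop ((eventually_ge_atTop m).mono (hge m))
  have hB : ∀ n, b n ≤ B := fun n => le_of_tendsto (hb n) <|
    Nat.hyperfilter_le_atTop ((eventually_gt_atTop n).mono fun m => hle m n)
  have hAL : A ≤ L := ge_of_tendsto' haL hA
  have hLB : L ≤ B := le_of_tendsto' hbL hB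
  linarith

namespace ZeroAtInftyContinuousMap

lemma norm_apply_le_norm {α β : Type*} [TopologicalSpace α] [SeminormedAddCommGroup β]
    (f : C₀(α, β)) (i : α) : ‖f i‖ ≤ ‖f‖ :=
  norm_toBCF_eq_norm (f := f) ▸ f.toBCF.norm_coe_le_norm i

noncomputable section

variable {α : Type*} [TopologicalSpace α] [DiscreteTopology α]

def ofTendstoCofinite {β : Type*} [TopologicalSpace β] [Zero β] (f : α → β)
    (hf : Tendsto f cofinite (nhds 0)) : C₀(α, β) :=
  ⟨⟨f, continuous_of_discreteTopology⟩, cocompact_eq_cofinite α ▸ hf⟩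

def finiteIndicator (s : Set α) (hs : s.Finite) : C₀(α, ℝ) :=
  ofTendstoCofinite (s.indicator 1) <| tendsto_nhds_of_eventually_eq <|
    mem_of_superset hs.compl_mem_cofinite fun _ hi => Set.indicator_of_notMem hi 1

@[simp]
lemma finiteIndicator_apply (s : Set α) (hs : s.Finite) (i : α) :
    finiteIndicator s hs i = s.indicator 1 i :=
  rfl

lemma norm_finiteIndicator_le_one (s : Set α) (hs : s.Finite) :
    ‖finiteIndicator s hs‖ ≤ 1 := by
  rw [← norm_toBCF_eq_norm, BoundedContinuousFunction.norm_le zero_le_one]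
  intro i
  by_cases hi : i ∈ s <;> simp [hi]

lemma norm_finiteIndicator_add_le_one {s t : Set α} (hs : s.Finite) (ht : t.Finite)
    (hst : Disjoint s t) : ‖finiteIndicator s hs + finiteIndicator t ht‖ ≤ 1 := by
  have : finiteIndicator s hs + finiteIndicator t ht = finiteIndicator (s ∪ t) (hs.union ht) := by
    ext i
    simp [Set.indicator_union_of_disjoint hst]
  exact this ▸ norm_finiteIndicator_le_one _ _

lemma two_le_norm_finiteIndicator_add {s t : Set α} (hs : s.Finite) (ht : t.Finite) {i : α}
    (his : i ∈ s) (hit : i ∈ t) : 2 ≤ ‖finiteIndicator s hs + finiteIndicator t ht‖ := by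
  have := norm_apply_le_norm (finiteIndicator s hs + finiteIndicator t ht) i
  norm_num [his, hit] at this
  exact this

end

end ZeroAtInftyContinuousMap

open ZeroAtInftyContinuousMap

theorem no_c0_isomorph_is_stable_general {X : Type*} [NormedAddCommGroup X] [NormedSpace ℝ X]
    (T : C₀(ℕ, ℝ) →ₗ[ℝ] X)
    (hlow : ∀ v, ‖v‖ ≤ ‖T v‖) (hup : ∀ v, ‖T v‖ ≤ (3 / 2) * ‖v‖) :
    ¬ IsStableSpace X := by
  have hT_unit : ∀ v, ‖v‖ ≤ 1 → ‖T v‖ ≤ 3 / 2 := fun v hv => by linarith [hup v]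
  have hbounded : ∀ f : ℕ → C₀(ℕ, ℝ), (∀ i, ‖f i‖ ≤ 1) →
      Bornology.IsBounded (Set.range (T ∘ f)) := fun f hf =>
    isBounded_iff_forall_norm_le.2 ⟨3 / 2, Set.forall_mem_range.2 fun i => hT_unit _ (hf i)⟩
  refine not_isStableSpace_of_dist_gap
    (T ∘ fun m => finiteIndicator {m} (Set.finite_singleton m))
    (T ∘ fun n => -finiteIndicator (Set.Iic n) (Set.finite_Iic n))
    (hbounded _ fun m => norm_finiteIndicator_le_one _ _)
    (hbounded _ fun n => (norm_neg _).trans_le (norm_finiteIndicator_le_one _ _))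
    (by norm_num : (3 / 2 : ℝ) < 2) (fun m n hmn => ?_) (fun m n hnm => ?_)
  all_goals simp only [Function.comp_apply, dist_eq_norm, ← map_sub, sub_neg_eq_add]
  · exact (two_le_norm_finiteIndicator_add _ _ (Set.mem_singleton m) (Set.mem_Iic.2 hmn)).trans
      (hlow _)
  · exact hT_unit _ (norm_finiteIndicator_add_le_one _ _ (by simpa using hnm))

/-- No Banach space linearly isomorphic to `c₀` (here: containing a `3/2`-isomorphic
copy of `c₀`) is stable. -/
theorem no_c0_isomorph_is_stable {X : Type*} [NormedAddCommGroup X] [NormedSpace ℝ X]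
    [CompleteSpace X]
    (T : C₀(ℕ, ℝ) →ₗ[ℝ] X)
    (hlow : ∀ v, ‖v‖ ≤ ‖T v‖) (hup : ∀ v, ‖T v‖ ≤ (3 / 2) * ‖v‖) :
    ¬ IsStableSpace X :=
  no_c0_isomorph_is_stable_general T hlow hup
end

section
/- In the gluing construction: let X, Y be Banach spaces, ε₀ > 0, M a subset of X, and for each n ∈ ℤ let f_n : B_n → Y (where B_n = {x ∈ M : ‖x‖ ≤ 2^{n+1}}) satisfy f_n(0)=0 and ‖x−y‖ ≤ ‖f_n(x)−f_n(y)‖ ≤ (1+ε₀)‖x−y‖ for x,y ∈ B_n. Define f : M → Y by f(x) = λ_x f_n(x) + (1−λ_x) f_{n+1}(x) when 2^n ≤ ‖x‖ ≤ 2^{n+1}, where λ_x = (2^{n+1} − ‖x‖)/2^n. Then f is 9(1+ε₀)-Lipschitz. -/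
/-!
Write `L = 1 + ε₀`. On an annulus `2^n ≤ ‖x‖ ≤ 2^(n+1)` both `f_n` and `f_{n+1}` are
`L`-Lipschitz and bounded by `2L·2^n`, while the weight `λ_x` is `2^(-n)`-Lipschitz; so `f` is
`5L`-Lipschitz on each annulus. On the sphere `‖x‖ = 2^(n+1)` the formulas of the two adjacent
annuli both reduce to `f_{n+1}`, and `‖f x - f_{n+1} x‖ ≤ 4L·|‖x‖ - 2^(n+1)|` on either side,
which gives `5L` for points in adjacent annuli as well. Finally, if `‖y‖ ≤ ‖x‖ / 2` then
`‖x‖ + ‖y‖ ≤ 3‖x - y‖`, and the growth bound `‖f z‖ ≤ L‖z‖` gives `3L`.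
-/

section ConvexCombination

variable {E : Type*} [NormedAddCommGroup E] [NormedSpace ℝ E]

lemma norm_convex_combo_le {s r : ℝ} (hs₀ : 0 ≤ s) (hs₁ : s ≤ 1) {a b : E}
    (ha : ‖a‖ ≤ r) (hb : ‖b‖ ≤ r) : ‖s • a + (1 - s) • b‖ ≤ r :=
  mem_closedBall_zero_iff.1 <| convex_closedBall (0 : E) r (mem_closedBall_zero_iff.2 ha)
    (mem_closedBall_zero_iff.2 hb) hs₀ (sub_nonneg.2 hs₁) (add_sub_cancel s 1)

lemma norm_convex_combo_sub_convex_combo_le {s t r : ℝ} (hs₀ : 0 ≤ s) (hs₁ : s ≤ 1)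
    {a b c d : E} (hac : ‖a - c‖ ≤ r) (hbd : ‖b - d‖ ≤ r) :
    ‖(s • a + (1 - s) • b) - (t • c + (1 - t) • d)‖ ≤ r + |s - t| * ‖c - d‖ := by
  have split : (s • a + (1 - s) • b) - (t • c + (1 - t) • d)
      = (s • (a - c) + (1 - s) • (b - d)) + (s - t) • (c - d) := by module
  rw [split, ← Real.norm_eq_abs, ← norm_smul]
  exact (norm_add_le _ _).trans (add_le_add_left (norm_convex_combo_le hs₀ hs₁ hac hbd) _)

lemma norm_convex_combo_sub_left (s : ℝ) (a b : E) :
    ‖(s • a + (1 - s) • b) - a‖ = |1 - s| * ‖b - a‖ := by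
  rw [show (s • a + (1 - s) • b) - a = (1 - s) • (b - a) by module, norm_smul,
    Real.norm_eq_abs]

lemma norm_convex_combo_sub_right (s : ℝ) (a b : E) :
    ‖(s • a + (1 - s) • b) - b‖ = |s| * ‖a - b‖ := by
  rw [show (s • a + (1 - s) • b) - b = s • (a - b) by module, norm_smul, Real.norm_eq_abs]

end ConvexCombination

section DyadicWeight

lemma two_zpow_succ (n : ℤ) : (2 : ℝ) ^ (n + 1) = 2 * 2 ^ n := by
  rw [zpow_add_one₀ two_ne_zero, mul_comm]

lemma exists_mem_dyadic_annulus {r : ℝ} (hr : 0 < r) :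
    ∃ n : ℤ, (2 : ℝ) ^ n ≤ r ∧ r ≤ (2 : ℝ) ^ (n + 1) := by
  refine ⟨Int.log 2 r, ?_, ?_⟩
  · exact_mod_cast Int.zpow_log_le_self one_lt_two hr
  · exact_mod_cast (Int.lt_zpow_succ_log_self one_lt_two r).le

/-- The weight `λ` of `f_n` at a point of norm `r` in the annulus `2^n ≤ r ≤ 2^(n+1)`. -/
noncomputable def dyadicWeight (n : ℤ) (r : ℝ) : ℝ := ((2 : ℝ) ^ (n + 1) - r) / (2 : ℝ) ^ n

variable {n : ℤ} {r : ℝ}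

lemma dyadicWeight_nonneg (hr : r ≤ (2 : ℝ) ^ (n + 1)) : 0 ≤ dyadicWeight n r :=
  div_nonneg (sub_nonneg.2 hr) (zpow_nonneg zero_le_two n)

lemma one_sub_dyadicWeight : 1 - dyadicWeight n r = (r - (2 : ℝ) ^ n) / (2 : ℝ) ^ n := by
  have : (2 : ℝ) ^ n ≠ 0 := zpow_ne_zero n two_ne_zero
  rw [dyadicWeight, two_zpow_succ]
  field_simp
  ring

lemma one_sub_dyadicWeight_nonneg (hr : (2 : ℝ) ^ n ≤ r) : 0 ≤ 1 - dyadicWeight n r := by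
  rw [one_sub_dyadicWeight]
  exact div_nonneg (sub_nonneg.2 hr) (zpow_nonneg zero_le_two n)

lemma dyadicWeight_le_one (hr : (2 : ℝ) ^ n ≤ r) : dyadicWeight n r ≤ 1 :=
  sub_nonneg.1 (one_sub_dyadicWeight_nonneg hr)

lemma abs_dyadicWeight_sub_dyadicWeight (r r' : ℝ) :
    |dyadicWeight n r - dyadicWeight n r'| = |r - r'| / (2 : ℝ) ^ n := by
  rw [dyadicWeight, dyadicWeight, div_sub_div_same, abs_div,
    abs_of_pos (zpow_pos two_pos n : (0 : ℝ) < 2 ^ n),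
    sub_sub_sub_cancel_left, abs_sub_comm]

end DyadicWeight

lemma norm_sub_le_of_two_mul_norm_le {X Y : Type*} [SeminormedAddCommGroup X]
    [SeminormedAddCommGroup Y] {L : ℝ} (hL : 0 ≤ L) {x y : X} {a b : Y}
    (ha : ‖a‖ ≤ L * ‖x‖) (hb : ‖b‖ ≤ L * ‖y‖) (hxy : 2 * ‖y‖ ≤ ‖x‖) :
    ‖a - b‖ ≤ 3 * L * ‖x - y‖ := by
  have hsum : ‖x‖ + ‖y‖ ≤ 3 * ‖x - y‖ := by linarith [norm_sub_norm_le x y]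
  calc ‖a - b‖ ≤ ‖a‖ + ‖b‖ := norm_sub_le a b
    _ ≤ L * (‖x‖ + ‖y‖) := by linarith
    _ ≤ L * (3 * ‖x - y‖) := mul_le_mul_of_nonneg_left hsum hL
    _ = 3 * L * ‖x - y‖ := by ring

section Gluing

variable {X Y : Type*} [NormedAddCommGroup X] [NormedAddCommGroup Y]
  {M : Set X} {L : ℝ} {fn : ℤ → X → Y} {f : X → Y} {n : ℤ} {x y : X}

lemma norm_le_zpow_succ_succ (h : ‖x‖ ≤ (2 : ℝ) ^ (n + 1)) : ‖x‖ ≤ (2 : ℝ) ^ (n + 1 + 1) :=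
  h.trans (zpow_le_zpow_right₀ one_le_two (by omega))

lemma norm_fn_sub_fn_succ_le (hL : 0 ≤ L)
    (hbound : ∀ n : ℤ, ∀ x ∈ M, ‖x‖ ≤ (2 : ℝ) ^ (n + 1) → ‖fn n x‖ ≤ L * ‖x‖)
    (hx : x ∈ M) (h₂ : ‖x‖ ≤ (2 : ℝ) ^ (n + 1)) :
    ‖fn n x - fn (n + 1) x‖ ≤ 4 * L * (2 : ℝ) ^ n := by
  have h₁ := hbound n x hx h₂
  have h₂' := hbound (n + 1) x hx (norm_le_zpow_succ_succ h₂)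
  have hx₂ : L * ‖x‖ ≤ L * (2 * (2 : ℝ) ^ n) :=
    mul_le_mul_of_nonneg_left (two_zpow_succ n ▸ h₂) hL
  linarith [norm_sub_le (fn n x) (fn (n + 1) x)]

variable [NormedSpace ℝ Y]

def IsDyadicGluing (M : Set X) (fn : ℤ → X → Y) (f : X → Y) : Prop :=
  ∀ x ∈ M, ∀ n : ℤ, (2 : ℝ) ^ n ≤ ‖x‖ → ‖x‖ ≤ (2 : ℝ) ^ (n + 1) →
    f x = dyadicWeight n ‖x‖ • fn n x + (1 - dyadicWeight n ‖x‖) • fn (n + 1) x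

lemma norm_glued_le
    (hbound : ∀ n : ℤ, ∀ x ∈ M, ‖x‖ ≤ (2 : ℝ) ^ (n + 1) → ‖fn n x‖ ≤ L * ‖x‖)
    (hf : IsDyadicGluing M fn f) (hx : x ∈ M)
    (h₁ : (2 : ℝ) ^ n ≤ ‖x‖) (h₂ : ‖x‖ ≤ (2 : ℝ) ^ (n + 1)) : ‖f x‖ ≤ L * ‖x‖ := by
  rw [hf x hx n h₁ h₂]
  exact norm_convex_combo_le (dyadicWeight_nonneg h₂) (dyadicWeight_le_one h₁)
    (hbound n x hx h₂) (hbound (n + 1) x hx (norm_le_zpow_succ_succ h₂))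

lemma norm_glued_sub_left_le (hL : 0 ≤ L)
    (hbound : ∀ n : ℤ, ∀ x ∈ M, ‖x‖ ≤ (2 : ℝ) ^ (n + 1) → ‖fn n x‖ ≤ L * ‖x‖)
    (hf : IsDyadicGluing M fn f) (hx : x ∈ M)
    (h₁ : (2 : ℝ) ^ n ≤ ‖x‖) (h₂ : ‖x‖ ≤ (2 : ℝ) ^ (n + 1)) :
    ‖f x - fn n x‖ ≤ 4 * L * (‖x‖ - (2 : ℝ) ^ n) := by
  have hpos : (0 : ℝ) < 2 ^ n := zpow_pos two_pos n
  rw [hf x hx n h₁ h₂, norm_convex_combo_sub_left, abs_of_nonneg (one_sub_dyadicWeight_nonneg h₁),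
    one_sub_dyadicWeight, norm_sub_rev]
  calc (‖x‖ - 2 ^ n) / 2 ^ n * ‖fn n x - fn (n + 1) x‖
      ≤ (‖x‖ - 2 ^ n) / 2 ^ n * (4 * L * 2 ^ n) :=
        mul_le_mul_of_nonneg_left (norm_fn_sub_fn_succ_le hL hbound hx h₂)
          (div_nonneg (sub_nonneg.2 h₁) hpos.le)
    _ = 4 * L * (‖x‖ - 2 ^ n) := by field_simp

lemma norm_glued_sub_right_le (hL : 0 ≤ L)
    (hbound : ∀ n : ℤ, ∀ x ∈ M, ‖x‖ ≤ (2 : ℝ) ^ (n + 1) → ‖fn n x‖ ≤ L * ‖x‖)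
    (hf : IsDyadicGluing M fn f) (hx : x ∈ M)
    (h₁ : (2 : ℝ) ^ n ≤ ‖x‖) (h₂ : ‖x‖ ≤ (2 : ℝ) ^ (n + 1)) :
    ‖f x - fn (n + 1) x‖ ≤ 4 * L * ((2 : ℝ) ^ (n + 1) - ‖x‖) := by
  have hpos : (0 : ℝ) < 2 ^ n := zpow_pos two_pos n
  rw [hf x hx n h₁ h₂, norm_convex_combo_sub_right, abs_of_nonneg (dyadicWeight_nonneg h₂),
    dyadicWeight]
  calc (2 ^ (n + 1) - ‖x‖) / 2 ^ n * ‖fn n x - fn (n + 1) x‖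
      ≤ (2 ^ (n + 1) - ‖x‖) / 2 ^ n * (4 * L * 2 ^ n) :=
        mul_le_mul_of_nonneg_left (norm_fn_sub_fn_succ_le hL hbound hx h₂)
          (div_nonneg (sub_nonneg.2 h₂) hpos.le)
    _ = 4 * L * (2 ^ (n + 1) - ‖x‖) := by field_simp

lemma norm_glued_sub_glued_le_of_same_annulus (hL : 0 ≤ L)
    (hbound : ∀ n : ℤ, ∀ x ∈ M, ‖x‖ ≤ (2 : ℝ) ^ (n + 1) → ‖fn n x‖ ≤ L * ‖x‖)
    (hlip : ∀ n : ℤ, ∀ x ∈ M, ∀ y ∈ M, ‖x‖ ≤ (2 : ℝ) ^ (n + 1) → ‖y‖ ≤ (2 : ℝ) ^ (n + 1) →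
      ‖fn n x - fn n y‖ ≤ L * ‖x - y‖)
    (hf : IsDyadicGluing M fn f) (hx : x ∈ M) (hy : y ∈ M)
    (hx₁ : (2 : ℝ) ^ n ≤ ‖x‖) (hx₂ : ‖x‖ ≤ (2 : ℝ) ^ (n + 1))
    (hy₁ : (2 : ℝ) ^ n ≤ ‖y‖) (hy₂ : ‖y‖ ≤ (2 : ℝ) ^ (n + 1)) :
    ‖f x - f y‖ ≤ 5 * L * ‖x - y‖ := by
  have hpos : (0 : ℝ) < 2 ^ n := zpow_pos two_pos n
  have hweight : |dyadicWeight n ‖x‖ - dyadicWeight n ‖y‖| ≤ ‖x - y‖ / 2 ^ n := by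
    rw [abs_dyadicWeight_sub_dyadicWeight]
    exact div_le_div_of_nonneg_right (abs_norm_sub_norm_le x y) hpos.le
  rw [hf x hx n hx₁ hx₂, hf y hy n hy₁ hy₂]
  calc _ ≤ L * ‖x - y‖
        + |dyadicWeight n ‖x‖ - dyadicWeight n ‖y‖| * ‖fn n y - fn (n + 1) y‖ :=
        norm_convex_combo_sub_convex_combo_le (dyadicWeight_nonneg hx₂)
          (dyadicWeight_le_one hx₁) (hlip n x hx y hy hx₂ hy₂)
          (hlip (n + 1) x hx y hy (norm_le_zpow_succ_succ hx₂) (norm_le_zpow_succ_succ hy₂))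
    _ ≤ L * ‖x - y‖ + ‖x - y‖ / 2 ^ n * (4 * L * 2 ^ n) := by
        gcongr
        exact norm_fn_sub_fn_succ_le hL hbound hy hy₂
    _ = 5 * L * ‖x - y‖ := by field_simp; ring

lemma norm_glued_sub_glued_le_of_adjacent_annuli (hL : 0 ≤ L)
    (hbound : ∀ n : ℤ, ∀ x ∈ M, ‖x‖ ≤ (2 : ℝ) ^ (n + 1) → ‖fn n x‖ ≤ L * ‖x‖)
    (hlip : ∀ n : ℤ, ∀ x ∈ M, ∀ y ∈ M, ‖x‖ ≤ (2 : ℝ) ^ (n + 1) → ‖y‖ ≤ (2 : ℝ) ^ (n + 1) →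
      ‖fn n x - fn n y‖ ≤ L * ‖x - y‖)
    (hf : IsDyadicGluing M fn f) (hx : x ∈ M) (hy : y ∈ M)
    (hx₁ : (2 : ℝ) ^ (n + 1) ≤ ‖x‖) (hx₂ : ‖x‖ ≤ (2 : ℝ) ^ (n + 1 + 1))
    (hy₁ : (2 : ℝ) ^ n ≤ ‖y‖) (hy₂ : ‖y‖ ≤ (2 : ℝ) ^ (n + 1)) :
    ‖f x - f y‖ ≤ 5 * L * ‖x - y‖ := by
  have hfx := norm_glued_sub_left_le hL hbound hf hx hx₁ hx₂
  have hfy := norm_glued_sub_right_le hL hbound hf hy hy₁ hy₂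
  have hmid := hlip (n + 1) x hx y hy hx₂ (norm_le_zpow_succ_succ hy₂)
  have hnorms : L * (‖x‖ - ‖y‖) ≤ L * ‖x - y‖ :=
    mul_le_mul_of_nonneg_left (norm_sub_norm_le x y) hL
  calc ‖f x - f y‖
      = ‖(f x - fn (n + 1) x) + (fn (n + 1) x - fn (n + 1) y) - (f y - fn (n + 1) y)‖ := by
        congr 1; abel
    _ ≤ ‖f x - fn (n + 1) x‖ + ‖fn (n + 1) x - fn (n + 1) y‖ + ‖f y - fn (n + 1) y‖ :=
        norm_sub_le_of_le (norm_add_le _ _) le_rfl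
    _ ≤ 5 * L * ‖x - y‖ := by linarith

lemma norm_glued_sub_glued_le_of_le_two_mul (hL : 0 ≤ L)
    (hbound : ∀ n : ℤ, ∀ x ∈ M, ‖x‖ ≤ (2 : ℝ) ^ (n + 1) → ‖fn n x‖ ≤ L * ‖x‖)
    (hlip : ∀ n : ℤ, ∀ x ∈ M, ∀ y ∈ M, ‖x‖ ≤ (2 : ℝ) ^ (n + 1) → ‖y‖ ≤ (2 : ℝ) ^ (n + 1) →
      ‖fn n x - fn n y‖ ≤ L * ‖x - y‖)
    (hf : IsDyadicGluing M fn f) (hx : x ∈ M) (hy : y ∈ M)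
    (hx₁ : (2 : ℝ) ^ n ≤ ‖x‖) (hx₂ : ‖x‖ ≤ (2 : ℝ) ^ (n + 1))
    (hxy : ‖x‖ ≤ 2 * ‖y‖) (hyx : ‖y‖ ≤ ‖x‖) :
    ‖f x - f y‖ ≤ 5 * L * ‖x - y‖ := by
  by_cases hy₁ : (2 : ℝ) ^ n ≤ ‖y‖
  · exact norm_glued_sub_glued_le_of_same_annulus hL hbound hlip hf hx hy hx₁ hx₂ hy₁
      (hyx.trans hx₂)
  · obtain ⟨m, rfl⟩ : ∃ m, n = m + 1 := ⟨n - 1, by ring⟩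
    have hy₁' : (2 : ℝ) ^ m ≤ ‖y‖ := by linarith [two_zpow_succ m]
    exact norm_glued_sub_glued_le_of_adjacent_annuli hL hbound hlip hf hx hy hx₁ hx₂ hy₁'
      (not_le.1 hy₁).le

end Gluing

theorem gluing_is_lipschitz_general {X Y : Type*} [NormedAddCommGroup X] [NormedAddCommGroup Y]
    [NormedSpace ℝ Y]
    (M : Set X) (hM : ∀ x ∈ M, x ≠ 0)
    (ε₀ : ℝ) (hε₀ : 0 ≤ ε₀)
    (fn : ℤ → X → Y)
    (hnorm : ∀ n : ℤ, ∀ x ∈ M, ‖x‖ ≤ (2 : ℝ) ^ (n + 1) →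
      ‖x‖ ≤ ‖fn n x‖ ∧ ‖fn n x‖ ≤ (1 + ε₀) * ‖x‖)
    (hfn : ∀ n : ℤ, ∀ x ∈ M, ∀ y ∈ M, ‖x‖ ≤ (2 : ℝ) ^ (n + 1) → ‖y‖ ≤ (2 : ℝ) ^ (n + 1) →
      ‖x - y‖ ≤ ‖fn n x - fn n y‖ ∧ ‖fn n x - fn n y‖ ≤ (1 + ε₀) * ‖x - y‖)
    (f : X → Y)
    (hf : ∀ x ∈ M, ∀ n : ℤ, (2 : ℝ) ^ n ≤ ‖x‖ → ‖x‖ ≤ (2 : ℝ) ^ (n + 1) →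
      f x = ((((2 : ℝ) ^ (n + 1) - ‖x‖) / (2 : ℝ) ^ n) • fn n x)
          + ((1 - ((2 : ℝ) ^ (n + 1) - ‖x‖) / (2 : ℝ) ^ n) • fn (n + 1) x)) :
    ∀ x ∈ M, ∀ y ∈ M, ‖f x - f y‖ ≤ 9 * (1 + ε₀) * ‖x - y‖ := by
  intro x hx y hy
  wlog hyx : ‖y‖ ≤ ‖x‖ generalizing x y
  · rw [norm_sub_rev, norm_sub_rev x]
    exact this y hy x hx (le_of_not_ge hyx)
  have hL : 0 ≤ 1 + ε₀ := by linarith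
  have hbound := fun n z hz h ↦ (hnorm n z hz h).2
  have hlip := fun n x hx y hy h h' ↦ (hfn n x hx y hy h h').2
  have hxy : 0 ≤ (1 + ε₀) * ‖x - y‖ := by positivity
  obtain ⟨n, hn₁, hn₂⟩ := exists_mem_dyadic_annulus (norm_pos_iff.2 (hM x hx))
  rcases le_or_gt (2 * ‖y‖) ‖x‖ with hfar | hnear
  · obtain ⟨m, hm₁, hm₂⟩ := exists_mem_dyadic_annulus (norm_pos_iff.2 (hM y hy))
    have := norm_sub_le_of_two_mul_norm_le hL (norm_glued_le hbound hf hx hn₁ hn₂)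
      (norm_glued_le hbound hf hy hm₁ hm₂) hfar
    linarith
  · have := norm_glued_sub_glued_le_of_le_two_mul hL hbound hlip hf hx hy hn₁ hn₂ hnear.le hyx
    linarith

/-- The gluing construction: interpolating between `(1+ε₀)`-bi-Lipschitz embeddings `f_n`
of the dyadic balls `B_n = {x ∈ M : ‖x‖ ≤ 2^(n+1)}` produces a `9(1+ε₀)`-Lipschitz map. -/
theorem gluing_is_lipschitz {X Y : Type*} [NormedAddCommGroup X] [NormedAddCommGroup Y]
    [NormedSpace ℝ Y]
    (M : Set X) (hM : ∀ x ∈ M, x ≠ 0)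
    (ε₀ : ℝ) (hε₀ : 0 ≤ ε₀)
    (fn : ℤ → X → Y)
    (hfn0 : ∀ n : ℤ, fn n 0 = 0)
    (hnorm : ∀ n : ℤ, ∀ x ∈ M, ‖x‖ ≤ (2 : ℝ) ^ (n + 1) →
      ‖x‖ ≤ ‖fn n x‖ ∧ ‖fn n x‖ ≤ (1 + ε₀) * ‖x‖)
    (hfn : ∀ n : ℤ, ∀ x ∈ M, ∀ y ∈ M, ‖x‖ ≤ (2 : ℝ) ^ (n + 1) → ‖y‖ ≤ (2 : ℝ) ^ (n + 1) →
      ‖x - y‖ ≤ ‖fn n x - fn n y‖ ∧ ‖fn n x - fn n y‖ ≤ (1 + ε₀) * ‖x - y‖)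
    (f : X → Y)
    (hf : ∀ x ∈ M, ∀ n : ℤ, (2 : ℝ) ^ n ≤ ‖x‖ → ‖x‖ ≤ (2 : ℝ) ^ (n + 1) →
      f x = ((((2 : ℝ) ^ (n + 1) - ‖x‖) / (2 : ℝ) ^ n) • fn n x)
          + ((1 - ((2 : ℝ) ^ (n + 1) - ‖x‖) / (2 : ℝ) ^ n) • fn (n + 1) x)) :
    ∀ x ∈ M, ∀ y ∈ M, ‖f x - f y‖ ≤ 9 * (1 + ε₀) * ‖x - y‖ :=
  gluing_is_lipschitz_general M hM ε₀ hε₀ fn hnorm hfn f hf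
end

section
/- Let (K, d) be a compact metric space of diameter D > 0 and let μ : (0, D] → [0, ∞) be continuous and strictly decreasing with μ(D) = 0 and lim_{t→0} μ(t) = +∞. Then there exists a map f from K into the ℓ₂-sum (Σ_k ℓ_∞(R_k))₂ of finite-dimensional ℓ_∞ spaces such that for all x, y ∈ K: (1/2)·d(x,y)/μ̃(d(x,y)) ≤ ‖f(x) − f(y)‖ ≤ (π/√6)·d(x,y), where μ̃(t) = max(μ(t), 1). -/
open Filter Metric
open scoped ENNReal

/-! Choose scales `T k ∈ (0, D]` with `μ (T k) ≥ k` and a finite `T k / 8`-net `S k` of `K`.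
Block `k` of the embedding is the vector of distances to the points of `S k`, scaled by `1 / k`.
Unscaled blocks are `1`-Lipschitz, so `∑ 1 / k² = π² / 6` gives the upper bound. For
`d = dist x y` and `m = max (μ d) 1`, every `k ≥ ⌈m⌉` has `T k ≤ d`, so a net point close to `y`
makes block `k` at least `(3 / 4) d / k`; the tail `∑_{k ≥ ⌈m⌉} 1 / k² ≥ 1 / ⌈m⌉ ≥ 1 / (2 m)`
gives the lower bound. -/

open Finset in
theorem sub_le_sum_Ico_inv_sq {k n : ℕ} (hk : k ≠ 0) (h : k ≤ n) :
    (k : ℝ)⁻¹ - (n : ℝ)⁻¹ ≤ ∑ i ∈ Ico k n, ((i : ℝ) ^ 2)⁻¹ := by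
  refine Nat.le_induction (by simp) (fun n hn IH => ?_) n h
  rw [sum_Ico_succ_top hn]
  have hn0 : (0 : ℝ) < n := by exact_mod_cast (Nat.pos_of_ne_zero hk).trans_le hn
  have hterm : (n : ℝ)⁻¹ - ((n + 1 : ℕ) : ℝ)⁻¹ ≤ ((n : ℝ) ^ 2)⁻¹ := by
    push_cast
    rw [inv_sub_inv hn0.ne' (by positivity), add_sub_cancel_left, one_div, pow_two]
    gcongr
    linarith
  linarith

theorem exists_fin_dist_lt (X : Type*) [PseudoMetricSpace X] [CompactSpace X] {ε : ℝ}
    (hε : 0 < ε) : ∃ (n : ℕ) (s : Fin n → X), ∀ x, ∃ i, dist x (s i) < ε := by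
  obtain ⟨t, ht, hcover⟩ := totallyBounded_iff.mp (isCompact_univ (X := X)).totallyBounded ε hε
  obtain ⟨n, s, -, rfl⟩ := ht.fin_param
  refine ⟨n, s, fun x => ?_⟩
  obtain ⟨-, ⟨i, rfl⟩, hx⟩ := Set.mem_iUnion₂.mp (hcover (Set.mem_univ x))
  exact ⟨i, hx⟩

section NetDistances

variable {X : Type*} [PseudoMetricSpace X] {n : ℕ} (s : Fin n → X)

def netDistances (x : X) : Fin n → ℝ := fun i => dist x (s i)

theorem norm_netDistances_le_diam [BoundedSpace X] (x : X) :
    ‖netDistances s x‖ ≤ diam (Set.univ : Set X) :=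
  (pi_norm_le_iff_of_nonneg diam_nonneg).mpr fun i => by
    change ‖dist x (s i)‖ ≤ _
    rw [Real.norm_of_nonneg dist_nonneg]
    exact dist_le_diam_of_mem (Bornology.isBounded_univ.mpr ‹_›) trivial trivial

theorem norm_netDistances_sub_le (x y : X) :
    ‖netDistances s x - netDistances s y‖ ≤ dist x y :=
  (pi_norm_le_iff_of_nonneg dist_nonneg).mpr fun i => abs_dist_sub_le x y (s i)

theorem dist_sub_two_mul_le_norm_netDistances_sub {x y : X} {i : Fin n} {ε : ℝ}
    (hy : dist y (s i) ≤ ε) :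
    dist x y - 2 * ε ≤ ‖netDistances s x - netDistances s y‖ := by
  have hx : dist x y - ε ≤ dist x (s i) := by
    linarith [dist_triangle x (s i) y, dist_comm y (s i)]
  calc dist x y - 2 * ε ≤ dist x (s i) - dist y (s i) := by linarith
    _ ≤ ‖(netDistances s x - netDistances s y) i‖ := le_abs_self _
    _ ≤ _ := norm_le_pi_norm _ i

end NetDistances

section WeightedL2

variable {E : ℕ → Type*} [∀ k, NormedAddCommGroup (E k)]

theorem memℓp_two_of_norm_le_div {g : ∀ k, E k} {C : ℝ} (h : ∀ k, ‖g k‖ ≤ C / k) :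
    Memℓp g 2 := by
  refine memℓp_gen ?_
  simp only [ENNReal.toReal_ofNat, Real.rpow_two]
  refine (hasSum_zeta_two.summable.mul_left (C ^ 2)).of_nonneg_of_le (fun k => by positivity)
    fun k => ?_
  calc ‖g k‖ ^ 2 ≤ (C / k) ^ 2 := by gcongr; exact h k
    _ = C ^ 2 * (1 / (k : ℝ) ^ 2) := by ring

theorem lp.norm_le_pi_div_sqrt_six_mul {f : lp E 2} {C : ℝ} (hC : 0 ≤ C)
    (h : ∀ k, ‖f k‖ ≤ C / k) : ‖f‖ ≤ Real.pi / √6 * C := by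
  refine lp.norm_le_of_tsum_le (by norm_num) (by positivity) ?_
  simp only [ENNReal.toReal_ofNat, Real.rpow_two]
  have hsum := hasSum_zeta_two.mul_left (C ^ 2)
  have hle (k : ℕ) : ‖f k‖ ^ 2 ≤ C ^ 2 * (1 / (k : ℝ) ^ 2) := by
    calc ‖f k‖ ^ 2 ≤ (C / k) ^ 2 := by gcongr; exact h k
      _ = C ^ 2 * (1 / (k : ℝ) ^ 2) := by ring
  have hf : Summable fun k => ‖f k‖ ^ 2 := by
    simpa using (lp.memℓp f).summable (by norm_num : 0 < (2 : ℝ≥0∞).toReal)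
  calc ∑' k, ‖f k‖ ^ (2 : ℕ) ≤ ∑' k : ℕ, C ^ 2 * (1 / (k : ℝ) ^ 2) :=
        hf.tsum_le_tsum hle hsum.summable
    _ = (Real.pi / √6 * C) ^ 2 := by
        rw [hsum.tsum_eq, mul_pow, div_pow, Real.sq_sqrt (by norm_num)]
        ring

theorem lp.sq_div_le_norm_sq {f : lp E 2} {a : ℕ} (ha : a ≠ 0) {c : ℝ} (hc : 0 ≤ c)
    (h : ∀ k, a ≤ k → c / k ≤ ‖f k‖) : c ^ 2 / a ≤ ‖f‖ ^ 2 := by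
  have hpartial : ∀ n, a ≤ n → c ^ 2 * ((a : ℝ)⁻¹ - (n : ℝ)⁻¹) ≤ ‖f‖ ^ 2 := by
    intro n hn
    have := lp.sum_rpow_le_norm_rpow (p := 2) (by norm_num) f (Finset.Ico a n)
    simp only [ENNReal.toReal_ofNat, Real.rpow_two] at this
    refine le_trans ?_ this
    calc c ^ 2 * ((a : ℝ)⁻¹ - (n : ℝ)⁻¹)
        ≤ c ^ 2 * ∑ k ∈ Finset.Ico a n, ((k : ℝ) ^ 2)⁻¹ := by
          gcongr; exact sub_le_sum_Ico_inv_sq ha hn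
      _ = ∑ k ∈ Finset.Ico a n, (c / k) ^ 2 := by
          rw [Finset.mul_sum]; simp only [div_eq_mul_inv, mul_pow, inv_pow]
      _ ≤ _ := Finset.sum_le_sum fun k hk =>
          pow_le_pow_left₀ (by positivity) (h k (Finset.mem_Ico.mp hk).1) 2
  have hlim : Tendsto (fun n : ℕ => c ^ 2 * ((a : ℝ)⁻¹ - (n : ℝ)⁻¹)) atTop
      (nhds (c ^ 2 / a)) := by
    simpa [div_eq_mul_inv] using
      (tendsto_const_nhds.sub tendsto_inv_atTop_nhds_zero_nat).const_mul (c ^ 2)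
  exact le_of_tendsto hlim (eventually_atTop.mpr ⟨a, hpartial⟩)

end WeightedL2

theorem norm_inv_natCast_smul {E : Type*} [SeminormedAddCommGroup E] [NormedSpace ℝ E]
    (k : ℕ) (v : E) : ‖(k : ℝ)⁻¹ • v‖ = ‖v‖ / k := by
  rw [norm_smul, norm_inv, Real.norm_natCast, inv_mul_eq_div]

section NetEmbedding

variable {X : Type*} [PseudoMetricSpace X] [BoundedSpace X] {N : ℕ → ℕ}
  (S : ∀ k, Fin (N k) → X)

noncomputable def netEmbedding (x : X) : lp (fun k => Fin (N k) → ℝ) 2 :=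
  ⟨fun k => (k : ℝ)⁻¹ • netDistances (S k) x,
    memℓp_two_of_norm_le_div (C := diam (Set.univ : Set X)) fun k => by
      rw [norm_inv_natCast_smul]
      gcongr
      exact norm_netDistances_le_diam _ _⟩

theorem norm_netEmbedding_sub_apply (x y : X) (k : ℕ) :
    ‖(netEmbedding S x - netEmbedding S y) k‖ =
      ‖netDistances (S k) x - netDistances (S k) y‖ / k := by
  rw [lp.coeFn_sub, Pi.sub_apply, ← norm_inv_natCast_smul, smul_sub]
  rfl

theorem norm_netEmbedding_sub_le (x y : X) :
    ‖netEmbedding S x - netEmbedding S y‖ ≤ Real.pi / √6 * dist x y :=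
  lp.norm_le_pi_div_sqrt_six_mul dist_nonneg fun k => by
    rw [norm_netEmbedding_sub_apply]
    gcongr
    exact norm_netDistances_sub_le _ _ _

theorem sq_div_le_norm_netEmbedding_sub {x y : X} {a : ℕ} (ha : a ≠ 0) {ε : ℝ}
    (hε : 2 * ε ≤ dist x y) (hS : ∀ k, a ≤ k → ∃ i, dist y (S k i) ≤ ε) :
    (dist x y - 2 * ε) ^ 2 / a ≤ ‖netEmbedding S x - netEmbedding S y‖ ^ 2 :=
  lp.sq_div_le_norm_sq ha (sub_nonneg.mpr hε) fun k hk => by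
    obtain ⟨i, hi⟩ := hS k hk
    rw [norm_netEmbedding_sub_apply]
    gcongr
    exact dist_sub_two_mul_le_norm_netDistances_sub _ hi

end NetEmbedding

theorem sq_half_mul_div_le_div_ceil {m : ℝ} (hm : 1 ≤ m) (d : ℝ) :
    (1 / 2 * (d / m)) ^ 2 ≤ (d - 2 * (d / 8)) ^ 2 / ⌈m⌉₊ := by
  have ha_pos : (0 : ℝ) < ⌈m⌉₊ := by exact_mod_cast Nat.ceil_pos.mpr (by linarith)
  have ha_le : (⌈m⌉₊ : ℝ) ≤ 2 * m := by linarith [Nat.ceil_lt_add_one (by linarith : 0 ≤ m)]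
  calc (1 / 2 * (d / m)) ^ 2 = (d - 2 * (d / 8)) ^ 2 / (9 / 4 * m ^ 2) := by
        field_simp; ring
    _ ≤ (d - 2 * (d / 8)) ^ 2 / ⌈m⌉₊ := by
        gcongr
        nlinarith

theorem compact_embedding_into_l2_sum_linfty_general {K : Type*} [MetricSpace K] [CompactSpace K]
    (D : ℝ) (hD : 0 < D) (hdiam : Metric.diam (Set.univ : Set K) = D)
    (μ : ℝ → ℝ)
    (hanti : StrictAntiOn μ (Set.Ioc 0 D))
    (htop : Tendsto μ (nhdsWithin 0 (Set.Ioi 0)) atTop) :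
    ∃ (N : ℕ → ℕ) (f : K → lp (fun k : ℕ => (Fin (N k) → ℝ)) 2),
      ∀ x y : K,
        (x ≠ y → (1 / 2) * (dist x y / max (μ (dist x y)) 1) ≤ ‖f x - f y‖) ∧
        ‖f x - f y‖ ≤ (Real.pi / Real.sqrt 6) * dist x y := by
  choose T hT_ge hT_mem using fun k : ℕ =>
    ((htop.eventually_ge_atTop (k : ℝ)).and (Ioc_mem_nhdsGT hD)).exists
  choose N S hS using fun k => exists_fin_dist_lt K
    (div_pos (hT_mem k).1 (by norm_num : (0 : ℝ) < 8))
  refine ⟨N, netEmbedding S, fun x y => ⟨fun hxy => ?_, norm_netEmbedding_sub_le S x y⟩⟩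
  set d := dist x y
  set m := max (μ d) 1
  have hd : d ∈ Set.Ioc 0 D :=
    ⟨dist_pos.mpr hxy, hdiam ▸ dist_le_diam_of_mem isCompact_univ.isBounded trivial trivial⟩
  have hm : 1 ≤ m := le_max_right _ _
  have ha : ⌈m⌉₊ ≠ 0 := (Nat.ceil_pos.mpr (by linarith)).ne'
  have hnet (k : ℕ) (hk : ⌈m⌉₊ ≤ k) : ∃ i, dist y (S k i) ≤ d / 8 := by
    have hTk : T k ≤ d := (hanti.le_iff_ge hd (hT_mem k)).mp <| by
      calc μ d ≤ ⌈m⌉₊ := (le_max_left _ _).trans (Nat.le_ceil m)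
        _ ≤ k := by exact_mod_cast hk
        _ ≤ μ (T k) := hT_ge k
    obtain ⟨i, hi⟩ := hS k y
    exact ⟨i, by linarith⟩
  have hlow := sq_div_le_norm_netEmbedding_sub S (x := x) ha (by linarith [hd.1]) hnet
  exact (pow_le_pow_iff_left₀ (by positivity) (norm_nonneg _) two_ne_zero).mp
    ((sq_half_mul_div_le_div_ceil hm d).trans hlow)

/-- Nearly bi-Lipschitz embedding of a compact metric space into an `ℓ₂`-sum of
finite-dimensional `ℓ_∞` spaces, with lower modulus controlled by `μ`. -/
theorem compact_embedding_into_l2_sum_linfty {K : Type*} [MetricSpace K] [CompactSpace K]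
    [Nonempty K]
    (D : ℝ) (hD : 0 < D) (hdiam : Metric.diam (Set.univ : Set K) = D)
    (μ : ℝ → ℝ)
    (hcont : ContinuousOn μ (Set.Ioc 0 D))
    (hanti : StrictAntiOn μ (Set.Ioc 0 D))
    (hpos : ∀ t ∈ Set.Ioc (0 : ℝ) D, 0 ≤ μ t)
    (hD0 : μ D = 0)
    (htop : Tendsto μ (nhdsWithin 0 (Set.Ioi 0)) atTop) :
    ∃ (N : ℕ → ℕ) (f : K → lp (fun k : ℕ => (Fin (N k) → ℝ)) 2),
      ∀ x y : K,
        (x ≠ y → (1 / 2) * (dist x y / max (μ (dist x y)) 1) ≤ ‖f x - f y‖) ∧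
        ‖f x - f y‖ ≤ (Real.pi / Real.sqrt 6) * dist x y :=
  compact_embedding_into_l2_sum_linfty_general D hD hdiam μ hanti htop
end

section
/- A weakly null spreading basic sequence in a Banach space is unconditional; consequently, in a reflexive Banach space every spreading basic sequence is unconditional. -/
open Filter Metric

/-!
By Mazur's theorem a weakly null sequence has, arbitrarily far out, convex block combinations of
arbitrarily small norm. Fix consecutive blocks `[b p, b (p + 1))` carrying such small vectors
`V p`. In `∑ aᵢ vᵢ` put `vᵢ = x (b i)` for `i ∈ s` and `vᵢ = V i` otherwise: by the maximum
principle for the convex function `v ↦ ‖∑ aᵢ vᵢ‖` on a product of convex hulls, its norm is at most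
that of some `∑ aᵢ x (kᵢ)` with `k` increasing, hence at most `C ‖∑ aᵢ xᵢ‖`. Dropping the small
`V`'s and spreading back give `‖∑_{i ∈ s} aᵢ xᵢ‖ ≤ C² ‖∑ aᵢ xᵢ‖`; a change of signs is the
difference of two such restrictions, so `K = 2 C²` works.
-/

section

variable {X : Type*} [NormedAddCommGroup X] [NormedSpace ℝ X]

def WeaklyNull (x : ℕ → X) : Prop :=
  ∀ φ : X →L[ℝ] ℝ, Tendsto (fun n => φ (x n)) atTop (nhds 0)

def IsSpreading (x : ℕ → X) (C : ℝ) : Prop :=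
  ∀ (n : ℕ) (a : Fin n → ℝ) (k : ℕ → ℕ), StrictMono k →
    ‖∑ i : Fin n, a i • x (i : ℕ)‖ ≤ C * ‖∑ i : Fin n, a i • x (k i)‖ ∧
    ‖∑ i : Fin n, a i • x (k i)‖ ≤ C * ‖∑ i : Fin n, a i • x (i : ℕ)‖

theorem WeaklyNull.zero_mem_closure_convexHull_image_Ici {x : ℕ → X} (hx : WeaklyNull x)
    (N : ℕ) : (0 : X) ∈ closure (convexHull ℝ (x '' Set.Ici N)) := by
  by_contra h
  obtain ⟨f, u, hf0, hfu⟩ :=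
    geometric_hahn_banach_point_closed (convex_convexHull ℝ _).closure isClosed_closure h
  rw [map_zero] at hf0
  obtain ⟨m, hfm, hNm⟩ := (((hx f).eventually_lt_const hf0).and (eventually_ge_atTop N)).exists
  exact (hfu _ (subset_closure (subset_convexHull ℝ _ ⟨m, hNm, rfl⟩))).not_gt hfm

theorem WeaklyNull.exists_mem_convexHull_image_Ico_norm_le {x : ℕ → X} (hx : WeaklyNull x)
    (N : ℕ) {δ : ℝ} (hδ : 0 < δ) :
    ∃ M, N < M ∧ ∃ v ∈ convexHull ℝ (x '' Set.Ico N M), ‖v‖ ≤ δ := by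
  classical
  obtain ⟨v, hv, hvδ⟩ := mem_closure_iff.1 (hx.zero_mem_closure_convexHull_image_Ici N) δ hδ
  rw [convexHull_eq_union_convexHull_finite_subsets, Set.mem_iUnion₂] at hv
  obtain ⟨t, ht, hvt⟩ := hv
  obtain ⟨s, hsN, rfl⟩ := Finset.subset_set_image_iff.1 ht
  refine ⟨N + s.sup id + 1, by omega, v, convexHull_mono ?_ hvt, by simpa using hvδ.le⟩
  rw [Finset.coe_image]
  refine Set.image_mono fun m hm => ⟨hsN hm, ?_⟩
  have : m ≤ s.sup id := Finset.le_sup (f := id) hm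
  omega

theorem WeaklyNull.exists_blocks_convexHull_norm_le {x : ℕ → X} (hx : WeaklyNull x)
    {δ : ℝ} (hδ : 0 < δ) :
    ∃ b : ℕ → ℕ, StrictMono b ∧ ∃ V : ℕ → X,
      ∀ p, V p ∈ convexHull ℝ (x '' Set.Ico (b p) (b (p + 1))) ∧ ‖V p‖ ≤ δ := by
  choose F hF V hV using fun N => hx.exists_mem_convexHull_image_Ico_norm_le N hδ
  have hsucc : ∀ p, F^[p + 1] 0 = F (F^[p] 0) := fun p => Function.iterate_succ_apply' F p 0
  refine ⟨fun p => F^[p] 0, strictMono_nat_of_lt_succ fun p => ?_, fun p => V (F^[p] 0),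
    fun p => ?_⟩
  · simpa only [hsucc] using hF _
  · simpa only [hsucc] using hV _

theorem strictMono_of_mem_Ico {m b : ℕ → ℕ} (h : ∀ p, m p ∈ Set.Ico (b p) (b (p + 1))) :
    StrictMono m :=
  strictMono_nat_of_lt_succ fun p => (h p).2.trans_le (h (p + 1)).1

theorem norm_sum_smul_le_of_mem_convexHull_blocks (x : ℕ → X) {n : ℕ} (a : Fin n → ℝ) {S : ℝ}
    (hS : ∀ k : ℕ → ℕ, StrictMono k → ‖∑ i : Fin n, a i • x (k i)‖ ≤ S)
    {b : ℕ → ℕ} (hb : StrictMono b) {v : Fin n → X}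
    (hv : ∀ i : Fin n, v i ∈ convexHull ℝ (x '' Set.Ico (b i) (b (i + 1)))) :
    ‖∑ i : Fin n, a i • v i‖ ≤ S := by
  let L : (Fin n → X) →ₗ[ℝ] X := ∑ i : Fin n, a i • LinearMap.proj i
  have hL : ∀ w, L w = ∑ i : Fin n, a i • w i := fun w => by simp [L]
  have hv' : v ∈ convexHull ℝ (Set.univ.pi fun i : Fin n => x '' Set.Ico (b i) (b (i + 1))) := by
    rw [convexHull_pi]
    exact fun i _ => hv i
  obtain ⟨w, hw, hvw⟩ :=
    (convexOn_univ_norm.comp_linearMap L).exists_ge_of_mem_convexHull (Set.subset_univ _) hv'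
  choose m hm hxm using fun i => hw i (Set.mem_univ i)
  let k : ℕ → ℕ := fun p => if h : p < n then m ⟨p, h⟩ else b p
  have hk : ∀ p, k p ∈ Set.Ico (b p) (b (p + 1)) := fun p => by
    by_cases h : p < n
    · simpa [k, h] using hm ⟨p, h⟩
    · simpa [k, h] using hb (Nat.lt_succ_self p)
  calc ‖∑ i : Fin n, a i • v i‖ ≤ ‖∑ i : Fin n, a i • w i‖ := by
        simpa only [Function.comp, hL] using hvw
    _ = ‖∑ i : Fin n, a i • x (k i)‖ := by simp [k, hxm]
    _ ≤ S := hS k (strictMono_of_mem_Ico hk)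

theorem IsSpreading.norm_sum_ite_smul_le_of_weaklyNull {x : ℕ → X} {C : ℝ} (hC : 0 ≤ C)
    (hs : IsSpreading x C) (hx : WeaklyNull x) {n : ℕ} (a : Fin n → ℝ) (s : Finset (Fin n)) :
    ‖∑ i : Fin n, (if i ∈ s then a i else 0) • x i‖ ≤ C * C * ‖∑ i : Fin n, a i • x i‖ := by
  classical
  set S := ‖∑ i : Fin n, a i • x i‖
  set T := ∑ i : Fin n, |a i|
  have hδ : ∀ δ > 0, ‖∑ i : Fin n, (if i ∈ s then a i else 0) • x i‖ ≤ C * (C * S + T * δ) := by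
    intro δ hδ
    obtain ⟨b, hb, V, hV⟩ := hx.exists_blocks_convexHull_norm_le hδ
    let v : Fin n → X := fun i => if i ∈ s then x (b i) else V i
    have hv : ∀ i : Fin n, v i ∈ convexHull ℝ (x '' Set.Ico (b i) (b (i + 1))) := fun i => by
      by_cases hi : i ∈ s
      · simpa [v, hi] using subset_convexHull ℝ (x '' Set.Ico (b i) (b (i + 1)))
          ⟨b i, ⟨le_rfl, hb (Nat.lt_succ_self _)⟩, rfl⟩
      · simpa [v, hi] using (hV i).1
    have hblock : ‖∑ i : Fin n, a i • v i‖ ≤ C * S :=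
      norm_sum_smul_le_of_mem_convexHull_blocks x a (fun k hk => (hs n a k hk).2) hb hv
    have hsplit : ∑ i : Fin n, (if i ∈ s then a i else 0) • x (b i) =
        ∑ i : Fin n, a i • v i - ∑ i : Fin n, (if i ∈ s then 0 else a i) • V i := by
      rw [← Finset.sum_sub_distrib]
      refine Finset.sum_congr rfl fun i _ => ?_
      by_cases hi : i ∈ s <;> simp [v, hi]
    have hsmall : ‖∑ i : Fin n, (if i ∈ s then 0 else a i) • V i‖ ≤ T * δ := by
      rw [Finset.sum_mul]
      refine (norm_sum_le _ _).trans (Finset.sum_le_sum fun i _ => ?_)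
      rw [norm_smul, Real.norm_eq_abs]
      refine mul_le_mul ?_ (hV _).2 (norm_nonneg _) (abs_nonneg _)
      split_ifs <;> simp
    calc ‖∑ i : Fin n, (if i ∈ s then a i else 0) • x i‖
        ≤ C * ‖∑ i : Fin n, (if i ∈ s then a i else 0) • x (b i)‖ := (hs n _ b hb).1
      _ ≤ C * (C * S + T * δ) := by
        refine mul_le_mul_of_nonneg_left ?_ hC
        rw [hsplit]
        exact (norm_sub_le _ _).trans (add_le_add hblock hsmall)
  have hlim : Tendsto (fun δ => C * (C * S + T * δ)) (nhdsWithin 0 (Set.Ioi 0))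
      (nhds (C * C * S)) := by
    have hcont : Continuous fun δ : ℝ => C * (C * S + T * δ) := by fun_prop
    simpa [mul_assoc] using (hcont.tendsto 0).mono_left nhdsWithin_le_nhds
  exact ge_of_tendsto hlim (eventually_nhdsWithin_of_forall hδ)

end

theorem weakly_null_spreading_basic_unconditional_general {X : Type*} [NormedAddCommGroup X]
    [NormedSpace ℝ X]
    (x : ℕ → X)
    (C : ℝ) (hC : 1 ≤ C)
    (hspread : ∀ (n : ℕ) (a : Fin n → ℝ) (k : ℕ → ℕ), StrictMono k →
      ‖∑ i : Fin n, a i • x (i : ℕ)‖ ≤ C * ‖∑ i : Fin n, a i • x (k i)‖ ∧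
      ‖∑ i : Fin n, a i • x (k i)‖ ≤ C * ‖∑ i : Fin n, a i • x (i : ℕ)‖)
    (hweak : ∀ φ : X →L[ℝ] ℝ, Tendsto (fun n => φ (x n)) atTop (nhds 0)) :
    ∃ K : ℝ, 0 < K ∧ ∀ (n : ℕ) (a ε : Fin n → ℝ), (∀ i, ε i = 1 ∨ ε i = -1) →
      ‖∑ i : Fin n, (ε i * a i) • x (i : ℕ)‖ ≤ K * ‖∑ i : Fin n, a i • x (i : ℕ)‖ := by
  classical
  refine ⟨2 * C * C, by nlinarith, fun n a ε hε => ?_⟩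
  let s : Finset (Fin n) := {i | ε i = 1}
  have hsign : ∀ i, ε i * a i = (if i ∈ s then a i else 0) - (if i ∈ sᶜ then a i else 0) :=
    fun i => by rcases hε i with h | h <;> norm_num [s, h]
  have hsuppress := fun t =>
    IsSpreading.norm_sum_ite_smul_le_of_weaklyNull (by linarith) hspread hweak a t
  calc ‖∑ i : Fin n, (ε i * a i) • x i‖
      = ‖∑ i : Fin n, (if i ∈ s then a i else 0) • x i
          - ∑ i : Fin n, (if i ∈ sᶜ then a i else 0) • x i‖ := by
        simp only [hsign, sub_smul, Finset.sum_sub_distrib]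
    _ ≤ 2 * C * C * ‖∑ i : Fin n, a i • x i‖ := by
        linarith [norm_sub_le (∑ i : Fin n, (if i ∈ s then a i else 0) • x i)
          (∑ i : Fin n, (if i ∈ sᶜ then a i else 0) • x i), hsuppress s, hsuppress sᶜ]

/-- A weakly null spreading basic sequence in a Banach space is unconditional. -/
theorem weakly_null_spreading_basic_unconditional {X : Type*} [NormedAddCommGroup X]
    [NormedSpace ℝ X] [CompleteSpace X]
    (x : ℕ → X) (hnz : ∀ n, x n ≠ 0)
    (Kb : ℝ) (hKb : 1 ≤ Kb)
    (hbasic : ∀ (a : ℕ → ℝ) (m n : ℕ), m ≤ n →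
      ‖∑ i ∈ Finset.range m, a i • x i‖ ≤ Kb * ‖∑ i ∈ Finset.range n, a i • x i‖)
    (C : ℝ) (hC : 1 ≤ C)
    (hspread : ∀ (n : ℕ) (a : Fin n → ℝ) (k : ℕ → ℕ), StrictMono k →
      ‖∑ i : Fin n, a i • x (i : ℕ)‖ ≤ C * ‖∑ i : Fin n, a i • x (k i)‖ ∧
      ‖∑ i : Fin n, a i • x (k i)‖ ≤ C * ‖∑ i : Fin n, a i • x (i : ℕ)‖)
    (hweak : ∀ φ : X →L[ℝ] ℝ, Tendsto (fun n => φ (x n)) atTop (nhds 0)) :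
    ∃ K : ℝ, 0 < K ∧ ∀ (n : ℕ) (a ε : Fin n → ℝ), (∀ i, ε i = 1 ∨ ε i = -1) →
      ‖∑ i : Fin n, (ε i * a i) • x (i : ℕ)‖ ≤ K * ‖∑ i : Fin n, a i • x (i : ℕ)‖ :=
  weakly_null_spreading_basic_unconditional_general x C hC hspread hweak
end
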